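/- Let M be a positroid on [n] without coloops. If cw_M(A) ≤ r for all k-element subsets A ⊆ [n], then cw_M(A) ≤ |A| − k + r for all A ⊆ [n] with |A| ≥ k. -/
import Mathlib


open Finset

attribute [local instance] Classical.propDecidable

noncomputable section

/-- A matroid on `Fin n`, presented by its collection of bases (basis exchange axiom). -/
structure FinMatroid (n : ℕ) where
  bases : Finset (Finset (Fin n))
  bases_nonempty : bases.Nonempty
  exchange : ∀ B₁ ∈ bases, ∀ B₂ ∈ bases, ∀ x ∈ B₁ \ B₂,
      ∃ y ∈ B₂ \ B₁, insert y (B₁.erase x) ∈ bases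

/-- Rank function associated to a collection of bases: `rk S = max |S ∩ B|`. -/
def rkOf {n : ℕ} (Bs : Finset (Finset (Fin n))) (S : Finset (Fin n)) : ℕ :=
  Bs.sup fun B => (S ∩ B).card

/-- Rank function of a matroid. -/
def rk {n : ℕ} (M : FinMatroid n) (S : Finset (Fin n)) : ℕ := rkOf M.bases S

/-- Independence w.r.t. a collection of bases. -/
def Indep {n : ℕ} (Bs : Finset (Finset (Fin n))) (S : Finset (Fin n)) : Prop :=
  ∃ B ∈ Bs, S ⊆ B

/-- A circuit: a dependent set all of whose proper subsets are independent. -/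
def IsCircuit {n : ℕ} (Bs : Finset (Finset (Fin n))) (C : Finset (Fin n)) : Prop :=
  ¬ Indep Bs C ∧ ∀ D ⊆ C, D ≠ C → Indep Bs D

/-- `M` is a quotient of `N`: every circuit of `N` is a union of circuits of `M`. -/
def IsQuotient {n : ℕ} (BsM BsN : Finset (Finset (Fin n))) : Prop :=
  ∀ C, IsCircuit BsN C → ∃ 𝒟 : Finset (Finset (Fin n)),
    (∀ D ∈ 𝒟, IsCircuit BsM D) ∧ C = 𝒟.sup id

/-- The values of a finset under the key `f`, sorted increasingly. -/
def sortedVals {n : ℕ} (f : Fin n → ℕ) (A : Finset (Fin n)) : List ℕ :=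
  (A.image f).sort (· ≤ ·)

/-- Gale order (w.r.t. the total order on `Fin n` given by an injective key `f`):
`A ≤ B` iff the `i`-th smallest element of `A` is `≤` the `i`-th smallest element of `B`. -/
def galeLE {n : ℕ} (f : Fin n → ℕ) (A B : Finset (Fin n)) : Prop :=
  List.Forall₂ (· ≤ ·) (sortedVals f A) (sortedVals f B)

/-- Position of `a` in the cyclic order starting at `i` (so `cpos i i = 0`). -/
def cpos {n : ℕ} (i a : Fin n) : ℕ := ((a - i : Fin n) : ℕ)

/-- Cyclic half-open interval `(a, b]`; in particular `(a, a] = ∅`. -/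
def cycIoc {n : ℕ} (a b : Fin n) : Finset (Fin n) :=
  Finset.univ.filter fun x => cpos a x ≠ 0 ∧ cpos a x ≤ cpos a b

/-- Cyclic closed interval `[a, b]`. -/
def cycIcc {n : ℕ} (a b : Fin n) : Finset (Fin n) :=
  Finset.univ.filter fun x => cpos a x ≤ cpos a b

/-- A decorated permutation: a permutation together with a coloring in `{0, ±1}`
whose zero set is exactly the set of non-fixed points. -/
structure DecoratedPerm (n : ℕ) where
  perm : Equiv.Perm (Fin n)
  col : Fin n → ℤ
  col_range : ∀ i, col i = 0 ∨ col i = 1 ∨ col i = -1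
  col_zero_iff : ∀ i, col i = 0 ↔ perm i ≠ i

/-- Grassmann necklace term `I_i = {a : a <_i π⁻¹(a) or col a = -1}`. -/
def neck {n : ℕ} (π : DecoratedPerm n) (i : Fin n) : Finset (Fin n) :=
  Finset.univ.filter fun a => cpos i a < cpos i (π.perm.symm a) ∨ π.col a = -1

/-- Grassmann conecklace term `J_i = π⁻¹(I_i)`. -/
def coneck {n : ℕ} (π : DecoratedPerm n) (i : Fin n) : Finset (Fin n) :=
  (neck π i).image π.perm.symm

/-- Rank of a decorated permutation: the common size of its necklace terms. -/
def drank {n : ℕ} (π : DecoratedPerm n) : ℕ :=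
  if h : 0 < n then (neck π ⟨0, h⟩).card else 0

/-- Grassmann interval `S^π_i = (π⁻¹(i), i]`, with the coloop convention `[n]`
(the loop convention `∅` is automatic since `(i, i] = ∅`). -/
def SInt {n : ℕ} (π : DecoratedPerm n) (i : Fin n) : Finset (Fin n) :=
  if π.col i = -1 then Finset.univ else cycIoc (π.perm.symm i) i

/-- Shift interval `S^{π,σ}_i = (π⁻¹(i), σ⁻¹(i)]`, with the convention `[n]` when
`i` is a loop of `π` and a coloop of `σ`. -/
def shiftInt {n : ℕ} (π σ : DecoratedPerm n) (i : Fin n) : Finset (Fin n) :=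
  if π.col i = 1 ∧ σ.col i = -1 then Finset.univ
  else cycIoc (π.perm.symm i) (σ.perm.symm i)

/-- CW-arrow starting at `i`: the cyclic interval from `i` to `π(i)` (all of `[n]` for coloops). -/
def cwArrow {n : ℕ} (π : DecoratedPerm n) (i : Fin n) : Finset (Fin n) :=
  if π.col i = -1 then Finset.univ
  else Finset.univ.filter fun j => cpos i j ≤ cpos i (π.perm i)

/-- The CW-function: the number of CW-arrows contained in `A` (for `A ≠ [n]`),
and `n - rk(M)` for `A = [n]`. -/
def cw {n : ℕ} (π : DecoratedPerm n) (A : Finset (Fin n)) : ℕ :=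
  if A = Finset.univ then n - drank π
  else (Finset.univ.filter fun i => cwArrow π i ⊆ A).card

/-- Bases of the positroid associated with a decorated permutation: sets that are
above every necklace term in the corresponding cyclic Gale order. -/
def positroidBases {n : ℕ} (π : DecoratedPerm n) : Finset (Finset (Fin n)) :=
  Finset.univ.filter fun B => ∀ i, galeLE (cpos i) (neck π i) B

/-- `σ` is the cyclic shift `ρ_A(π)`: positions in `A` are frozen; at a position
`i ∉ A` the new value is `π(j)` where `j` is the maximum of `Aᶜ` in the cyclic order
starting at `i`; new fixed points are decorated as loops. -/
def IsCyclicShift {n : ℕ} (π σ : DecoratedPerm n) (A : Finset (Fin n)) : Prop :=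
  (∀ i ∈ A, σ.perm i = π.perm i ∧ σ.col i = π.col i) ∧
  (∀ i ∉ A, ∃ j, j ∉ A ∧ (∀ j', j' ∉ A → cpos i j' ≤ cpos i j) ∧ σ.perm i = π.perm j) ∧
  (∀ i ∉ A, σ.col i = if σ.perm i = i then 1 else 0)

/-- The shift intervals `S^{π,σ}_i` partition `[n]`. -/
def ShiftPartition {n : ℕ} (π σ : DecoratedPerm n) : Prop :=
  (∀ i j : Fin n, i ≠ j → Disjoint (shiftInt π σ i) (shiftInt π σ j)) ∧
  Finset.univ.biUnion (shiftInt π σ) = Finset.univ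

/-- `C` is a cyclic component of `A`: a maximal cyclic interval contained in `A`. -/
def IsCycComponent {n : ℕ} [NeZero n] (A C : Finset (Fin n)) : Prop :=
  ∃ a b : Fin n, C = cycIcc a b ∧ C ⊆ A ∧ (a - 1) ∉ A ∧ (b + 1) ∉ A

/-- Bases of the lattice path matroid `M[U, L]`. -/
def lpmBases {n : ℕ} (U L : Finset (Fin n)) : Finset (Finset (Fin n)) :=
  Finset.univ.filter fun B => galeLE Fin.val U B ∧ galeLE Fin.val B L
end


section Aux

variable {n : ℕ}

lemma cpos_val (j x : Fin n) :
    cpos j x = if j.val ≤ x.val then x.val - j.val else x.val + n - j.val := by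
  have hj := j.isLt; have hx := x.isLt
  show ((x - j : Fin n) : ℕ) = _
  rw [Fin.sub_def]
  split_ifs with hle
  · show (n - j.val + x.val) % n = _
    rw [show n - j.val + x.val = (x.val - j.val) + n by omega,
        Nat.add_mod_right, Nat.mod_eq_of_lt (by omega)]
  · show (n - j.val + x.val) % n = _
    rw [Nat.mod_eq_of_lt (by omega)]; omega

lemma cpos_self (j : Fin n) : cpos j j = 0 := by
  rw [cpos_val]; simp

lemma cpos_eq_zero {j x : Fin n} (h : cpos j x = 0) : x = j := by
  rw [cpos_val] at h
  have hj := j.isLt; have hx := x.isLt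
  apply Fin.ext; split_ifs at h <;> omega

lemma cpos_add {a j x : Fin n} (h : cpos j x < cpos j a) :
    cpos a x = cpos a j + cpos j x := by
  have hj := j.isLt; have hx := x.isLt; have ha := a.isLt
  simp only [cpos_val] at h ⊢
  split_ifs at h ⊢ <;> omega

lemma cpos_rev {a i b : Fin n} (hne : i ≠ a) (h : cpos a i ≤ cpos a b) :
    cpos i b < cpos i a := by
  have hv : i.val ≠ a.val := fun hh => hne (Fin.ext hh)
  have hi := i.isLt; have hb := b.isLt; have ha := a.isLt
  simp only [cpos_val] at h ⊢
  split_ifs at h ⊢ <;> omega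

lemma mem_cwArrow_self (π : DecoratedPerm n) (hco : ∀ i, π.col i ≠ -1) (i : Fin n) :
    i ∈ cwArrow π i := by
  rw [cwArrow, if_neg (hco i)]
  simp [cpos_self]

lemma mem_cwArrow_iff (π : DecoratedPerm n) (hco : ∀ i, π.col i ≠ -1) (i j : Fin n) :
    j ∈ cwArrow π i ↔ cpos i j ≤ cpos i (π.perm i) := by
  rw [cwArrow, if_neg (hco i)]
  simp

lemma cw_step (π : DecoratedPerm n) (hco : ∀ i, π.col i ≠ -1)
    (A : Finset (Fin n)) (hA : A.Nonempty) :
    ∃ x ∈ A, cw π A ≤ cw π (A.erase x) + 1 := by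
  have hn : 0 < n := (hA.choose).pos
  by_cases hU : A = Finset.univ
  · -- A = univ, use x = 0
    subst hU
    set a : Fin n := ⟨0, hn⟩ with ha
    refine ⟨a, Finset.mem_univ a, ?_⟩
    have herase : (Finset.univ.erase a : Finset (Fin n)) ≠ Finset.univ := by
      intro hc
      have h1 : (Finset.univ.erase a : Finset (Fin n)).card = n - 1 := by
        rw [Finset.card_erase_of_mem (Finset.mem_univ a)]
        simp
      rw [hc] at h1
      simp at h1
      omega
    have hcw1 : cw π Finset.univ = n - (neck π a).card := by
      rw [cw, if_pos rfl, drank, dif_pos hn]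
    have hcw2 : cw π (Finset.univ.erase a)
        = (Finset.univ.filter fun i => cwArrow π i ⊆ Finset.univ.erase a).card := by
      rw [cw, if_neg herase]
    set T : Finset (Fin n) := Finset.univ.filter
      (fun i => cpos a i ≤ cpos a (π.perm i)) with hT
    -- card count: (neck π a).card + T.card = n
    have hneck : neck π a = Finset.univ.filter
        (fun x => cpos a x < cpos a (π.perm.symm x)) := by
      rw [neck]
      apply Finset.filter_congr
      intro x _
      simp [hco x]
    have hQT : (Finset.univ.filter
        (fun x => ¬ (cpos a x < cpos a (π.perm.symm x)))).card = T.card := by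
      apply Finset.card_bij (fun x _ => π.perm.symm x)
      · intro x hx
        simp only [Finset.mem_filter, Finset.mem_univ, true_and] at hx ⊢
        rw [hT]
        simp only [Finset.mem_filter, Finset.mem_univ, true_and]
        have : π.perm (π.perm.symm x) = x := π.perm.apply_symm_apply x
        rw [this]
        omega
      · intro x hx y hy hxy
        exact π.perm.symm.injective hxy
      · intro i hi
        refine ⟨π.perm i, ?_, by simp⟩
        simp only [Finset.mem_filter, Finset.mem_univ, true_and]
        rw [hT] at hi
        simp only [Finset.mem_filter, Finset.mem_univ, true_and] at hi
        rw [π.perm.symm_apply_apply]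
        omega
    have hsum : (neck π a).card + T.card = n := by
      rw [hneck, ← hQT]
      rw [Finset.card_filter_add_card_filter_not]
      simp
    -- T.erase a ⊆ filter
    have hsub : T.erase a ⊆
        Finset.univ.filter (fun i => cwArrow π i ⊆ Finset.univ.erase a) := by
      intro i hi
      rw [Finset.mem_erase] at hi
      obtain ⟨hia, hiT⟩ := hi
      rw [hT] at hiT
      simp only [Finset.mem_filter, Finset.mem_univ, true_and] at hiT
      simp only [Finset.mem_filter, Finset.mem_univ, true_and]
      intro y hy
      rw [mem_cwArrow_iff π hco] at hy
      rw [Finset.mem_erase]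
      refine ⟨?_, Finset.mem_univ y⟩
      intro hya
      subst hya
      exact absurd hy (not_le.mpr (cpos_rev hia hiT))
    have hTcard : T.card ≤ (Finset.univ.filter
        (fun i => cwArrow π i ⊆ Finset.univ.erase a)).card + 1 := by
      have h1 : T.card ≤ (T.erase a).card + 1 := by
        rcases Finset.decidableMem a T with hmem | hmem
        · rw [Finset.erase_eq_of_notMem hmem]; omega
        · rw [Finset.card_erase_of_mem hmem]
          have := Finset.card_pos.mpr ⟨a, hmem⟩
          omega
      exact le_trans h1 (by
        have := Finset.card_le_card hsub
        omega)
    rw [hcw1, hcw2]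
    omega
  · -- A ≠ univ
    obtain ⟨a, haA⟩ : ∃ a, a ∉ A := by
      by_contra hc
      push_neg at hc
      exact hU (Finset.eq_univ_iff_forall.mpr hc)
    have hcwA : cw π A = (Finset.univ.filter fun i => cwArrow π i ⊆ A).card := by
      rw [cw, if_neg hU]
    set S : Finset (Fin n) := Finset.univ.filter (fun i => cwArrow π i ⊆ A) with hS
    rcases S.eq_empty_or_nonempty with hSe | hSne
    · refine ⟨hA.choose, hA.choose_spec, ?_⟩
      rw [hcwA, hSe]
      simp
    · obtain ⟨m, hmS, hmin⟩ := S.exists_min_image (cpos a) hSne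
      have hmA : m ∈ A := by
        rw [hS] at hmS
        simp only [Finset.mem_filter, Finset.mem_univ, true_and] at hmS
        exact hmS (mem_cwArrow_self π hco m)
      refine ⟨m, hmA, ?_⟩
      have herase : A.erase m ≠ Finset.univ := by
        intro hc
        have hne := Finset.notMem_erase m A
        rw [hc] at hne
        exact hne (Finset.mem_univ m)
      have hsub : S ⊆ insert m
          (Finset.univ.filter fun i => cwArrow π i ⊆ A.erase m) := by
        intro j hj
        by_cases hjm : j = m
        · subst hjm; exact Finset.mem_insert_self j _
        · apply Finset.mem_insert_of_mem
          simp only [Finset.mem_filter, Finset.mem_univ, true_and]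
          have hjS := hj
          rw [hS] at hjS
          simp only [Finset.mem_filter, Finset.mem_univ, true_and] at hjS
          intro y hy
          rw [Finset.mem_erase]
          refine ⟨?_, hjS hy⟩
          intro hym
          subst hym
          -- y = m ∈ cwArrow π j, derive contradiction
          rw [mem_cwArrow_iff π hco] at hy
          have hano : cpos j (π.perm j) < cpos j a := by
            by_contra hc
            push_neg at hc
            exact haA (hjS ((mem_cwArrow_iff π hco j a).mpr hc))
          have hlt : cpos j y < cpos j a := lt_of_le_of_lt hy hano
          have hadd := cpos_add hlt
          have hmin' := hmin j hj
          have h0 : cpos j y = 0 := by omega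
          exact hjm (cpos_eq_zero h0).symm
      have hcwE : cw π (A.erase m)
          = (Finset.univ.filter fun i => cwArrow π i ⊆ A.erase m).card := by
        rw [cw, if_neg herase]
      rw [hcwA, hcwE]
      calc S.card ≤ (insert m
          (Finset.univ.filter fun i => cwArrow π i ⊆ A.erase m)).card :=
            Finset.card_le_card hsub
        _ ≤ _ := Finset.card_insert_le _ _

end Aux

/-- For a positroid without coloops: if `cw(A) ≤ r` for all `k`-element sets
`A`, then `cw(A) ≤ |A| - k + r` for all `A` with `|A| ≥ k`. -/
theorem stmt11 (n k r : ℕ) (π : DecoratedPerm n) (hco : ∀ i, π.col i ≠ -1)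
    (h : ∀ A : Finset (Fin n), A.card = k → cw π A ≤ r) :
    ∀ A : Finset (Fin n), k ≤ A.card → cw π A ≤ A.card - k + r := by
  intro A
  induction A using Finset.strongInduction with
  | _ A ih =>
    intro hk
    rcases eq_or_lt_of_le hk with he | hlt
    · have h1 := h A he.symm
      omega
    · have hA : A.Nonempty := by
        rw [← Finset.card_pos]; omega
      obtain ⟨x, hx, hstep⟩ := cw_step π hco A hA
      have hcard : (A.erase x).card = A.card - 1 := Finset.card_erase_of_mem hx
      have hk' : k ≤ (A.erase x).card := by omega
      have hih := ih (A.erase x) (Finset.erase_ssubset hx) hk'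
      omega
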